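/- arXiv:1504.07407 — 2 statements merged into one kernel-verified Lean document; each statement's English description precedes it below -/
import Mathlib

section
/- Let M be a compact metric space and (g_t)_{t∈[−1,1]} a family of Borel functions g_t : M \ S → ℝ on the complement of a closed set S, satisfying the Hölder-in-parameter bound |g_t(x) − g_s(x)| ≤ c|t − s|^β for all x ∈ M \ S and all t, s, with c > 0, β > 0. Suppose each g_t is integrable with respect to a Borel probability measure μ_t with μ_t(S) = 0, the map t ↦ μ_t is weak* continuous, g_0 extends continuously to M, and |∫ g_t dμ_t| ≤ A for a uniform constant A. Then lim_{t→0} ∫ g_t dμ_t = ∫ g_0 dμ_0. -/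
/-! Off the null set `S`, the Hölder bound compares `g t` with the continuous extension `G` of
`g 0` uniformly: `|g t - G| ≤ c |t|^β` holds `μ t`-a.e., so `∫ g t dμ t` lies within `c |t|^β` of
`∫ G dμ t`, and the latter tends to `∫ G dμ 0 = ∫ g 0 dμ 0` by weak* continuity of `t ↦ μ t`. -/

open MeasureTheory Filter Topology BoundedContinuousFunction

section

variable {Ω ι : Type*} [TopologicalSpace Ω] [MeasurableSpace Ω] [OpensMeasurableSpace Ω]

theorem tendsto_integral_of_tendsto_of_ae_abs_sub_le {l : Filter ι}
    {ν : ι → ProbabilityMeasure Ω} {ν₀ : ProbabilityMeasure Ω} (hν : Tendsto ν l (𝓝 ν₀))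
    {f : ι → Ω → ℝ} (F : Ω →ᵇ ℝ) {ε : ι → ℝ} (hε : Tendsto ε l (𝓝 0))
    (hf : ∀ᶠ i in l, Integrable (f i) (ν i : Measure Ω))
    (hfF : ∀ᶠ i in l, ∀ᵐ x ∂(ν i : Measure Ω), |f i x - F x| ≤ ε i) :
    Tendsto (fun i => ∫ x, f i x ∂(ν i : Measure Ω)) l (𝓝 (∫ x, F x ∂(ν₀ : Measure Ω))) := by
  have hdiff : Tendsto (fun i => ∫ x, f i x ∂(ν i : Measure Ω) - ∫ x, F x ∂(ν i : Measure Ω))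
      l (𝓝 0) := by
    refine squeeze_zero_norm' ?_ hε
    filter_upwards [hf, hfF] with i hfi hfFi
    rw [← integral_sub hfi (F.integrable _)]
    simpa using norm_integral_le_of_norm_le_const (f := fun x => f i x - F x) hfFi
  simpa using hdiff.add (ProbabilityMeasure.tendsto_iff_forall_integral_tendsto.1 hν F)

end

theorem tendsto_mul_abs_rpow_nhds_zero (c : ℝ) {β : ℝ} (hβ : 0 < β) :
    Tendsto (fun t : ℝ => c * |t| ^ β) (𝓝 0) (𝓝 0) := by
  have hcont : Continuous fun t : ℝ => c * |t| ^ β :=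
    (continuous_abs.rpow_const fun _ => Or.inr hβ.le).const_mul c
  simpa [Real.zero_rpow hβ.ne'] using hcont.tendsto 0

theorem stmt11_general {M : Type*} [MetricSpace M] [CompactSpace M] [MeasurableSpace M] [BorelSpace M]
    (S : Set M)
    (μ : ℝ → ProbabilityMeasure M)
    (hμcont : ContinuousOn μ (Set.Icc (-1) 1))
    (hnull : ∀ t ∈ Set.Icc (-1 : ℝ) 1, (μ t : Measure M) S = 0)
    (g : ℝ → M → ℝ) (c β : ℝ) (hβ : 0 < β)
    (hHolder : ∀ x ∉ S, ∀ t ∈ Set.Icc (-1 : ℝ) 1, ∀ s ∈ Set.Icc (-1 : ℝ) 1,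
      |g t x - g s x| ≤ c * |t - s| ^ β)
    (hint : ∀ t ∈ Set.Icc (-1 : ℝ) 1, Integrable (g t) (μ t : Measure M))
    (G : M → ℝ) (hGcont : Continuous G) (hG : ∀ x ∉ S, G x = g 0 x) :
    Tendsto (fun t => ∫ x, g t x ∂(μ t : Measure M)) (𝓝[Set.Icc (-1 : ℝ) 1] 0)
      (𝓝 (∫ x, g 0 x ∂(μ 0 : Measure M))) := by
  have h0 : (0 : ℝ) ∈ Set.Icc (-1 : ℝ) 1 := by norm_num
  have hae : ∀ t ∈ Set.Icc (-1 : ℝ) 1, ∀ᵐ x ∂(μ t : Measure M), x ∉ S :=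
    fun t ht => measure_eq_zero_iff_ae_notMem.1 (hnull t ht)
  have hG0 : ∫ x, G x ∂(μ 0 : Measure M) = ∫ x, g 0 x ∂(μ 0 : Measure M) :=
    integral_congr_ae <| by filter_upwards [hae 0 h0] with x hx using hG x hx
  rw [← hG0]
  refine tendsto_integral_of_tendsto_of_ae_abs_sub_le (hμcont 0 h0)
    (BoundedContinuousFunction.mkOfCompact ⟨G, hGcont⟩)
    ((tendsto_mul_abs_rpow_nhds_zero c hβ).mono_left nhdsWithin_le_nhds)
    (eventually_nhdsWithin_of_forall hint) (eventually_nhdsWithin_of_forall fun t ht => ?_)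
  filter_upwards [hae t ht] with x hx
  simpa [hG x hx] using hHolder x hx t ht 0 h0

/-- Continuity at `t = 0` of `t ↦ ∫ g_t dμ_t` under: a Hölder-in-parameter bound off a null
closed set `S`, weak* continuity of the measures, a continuous extension of `g_0`, and a
uniform bound on the integrals. -/
theorem stmt11 {M : Type*} [MetricSpace M] [CompactSpace M] [MeasurableSpace M] [BorelSpace M]
    (S : Set M) (hS : IsClosed S)
    (μ : ℝ → ProbabilityMeasure M)
    (hμcont : ContinuousOn μ (Set.Icc (-1) 1))
    (hnull : ∀ t ∈ Set.Icc (-1 : ℝ) 1, (μ t : Measure M) S = 0)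
    (g : ℝ → M → ℝ) (c β : ℝ) (hc : 0 < c) (hβ : 0 < β)
    (hHolder : ∀ x ∉ S, ∀ t ∈ Set.Icc (-1 : ℝ) 1, ∀ s ∈ Set.Icc (-1 : ℝ) 1,
      |g t x - g s x| ≤ c * |t - s| ^ β)
    (hint : ∀ t ∈ Set.Icc (-1 : ℝ) 1, Integrable (g t) (μ t : Measure M))
    (G : M → ℝ) (hGcont : Continuous G) (hG : ∀ x ∉ S, G x = g 0 x)
    (A : ℝ) (hA : ∀ t ∈ Set.Icc (-1 : ℝ) 1, |∫ x, g t x ∂(μ t : Measure M)| ≤ A) :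
    Tendsto (fun t => ∫ x, g t x ∂(μ t : Measure M)) (𝓝[Set.Icc (-1 : ℝ) 1] 0)
      (𝓝 (∫ x, g 0 x ∂(μ 0 : Measure M))) :=
  stmt11_general S μ hμcont hnull g c β hβ hHolder hint G hGcont hG
end

section
/- Let V be a finite-dimensional normed space with a direct sum decomposition V = E ⊕ F, and let A : V → V be a linear isomorphism preserving the decomposition (A(E) = E, A(F) = F). Suppose there are constants C > 0 and ρ ∈ (0,1) such that ‖Aⁿ|_E‖ · ‖(Aⁿ|_F)^{-1}‖ ≤ C ρⁿ for all n ∈ ℕ. Then for every nonzero v ∈ E and w ∈ F, limsup_{n→∞} (1/n) log ‖Aⁿ v‖ ≤ liminf_{n→∞} (1/n) log ‖Aⁿ w‖ − log(1/ρ); in particular every Lyapunov exponent of A along E is strictly smaller than every Lyapunov exponent along F. -/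
/-!
By Fekete's lemma applied to the submultiplicative sequence `‖Aⁿ|_E‖`, the numbers
`(1/n) log ‖Aⁿ|_E‖` converge to some `L`; no Lyapunov exponent needs to exist for this.
Vectors of `E` grow at most like `‖Aⁿ|_E‖`, so `limsup (1/n) log ‖Aⁿ v‖ ≤ L`. Taking the
supremum over `v ∈ E` in the domination inequality gives `‖Aⁿ|_E‖ ‖w‖ ≤ C ρⁿ ‖Aⁿ w‖`, so
`liminf (1/n) log ‖Aⁿ w‖ ≥ L + log (1/ρ)`. Invertibility of `A` on `E` and `F` keeps all these
sequences bounded, so that `limsup` and `liminf` in `ℝ` are not junk values.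
-/

open Filter Topology Real

section GrowthRate

variable {a σ : ℕ → ℝ} {L c : ℝ}

theorem tendsto_add_const_div (hσ : Tendsto (fun n : ℕ => σ n / n) atTop (𝓝 L)) (c : ℝ) :
    Tendsto (fun n : ℕ => (σ n + c) / n) atTop (𝓝 L) := by
  simpa [add_div] using hσ.add (tendsto_const_div_atTop_nhds_zero_nat c)

theorem isBoundedUnder_le_div_of_le_add (hσ : Tendsto (fun n : ℕ => σ n / n) atTop (𝓝 L))
    (h : ∀ n, a n ≤ σ n + c) : IsBoundedUnder (· ≤ ·) atTop fun n : ℕ => a n / n :=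
  (tendsto_add_const_div hσ c).isBoundedUnder_le.mono_le <|
    .of_forall fun n => div_le_div_of_nonneg_right (h n) n.cast_nonneg

theorem isBoundedUnder_ge_div_of_add_le (hσ : Tendsto (fun n : ℕ => σ n / n) atTop (𝓝 L))
    (h : ∀ n, σ n + c ≤ a n) : IsBoundedUnder (· ≥ ·) atTop fun n : ℕ => a n / n :=
  (tendsto_add_const_div hσ c).isBoundedUnder_ge.mono_ge <|
    .of_forall fun n => div_le_div_of_nonneg_right (h n) n.cast_nonneg

theorem limsup_div_le_of_le_add (hσ : Tendsto (fun n : ℕ => σ n / n) atTop (𝓝 L))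
    (ha : IsBoundedUnder (· ≥ ·) atTop fun n : ℕ => a n / n) (h : ∀ n, a n ≤ σ n + c) :
    limsup (fun n : ℕ => a n / n) atTop ≤ L :=
  (tendsto_add_const_div hσ c).limsup_eq ▸
    limsup_le_limsup (.of_forall fun n => div_le_div_of_nonneg_right (h n) n.cast_nonneg)
      ha.isCoboundedUnder_le (tendsto_add_const_div hσ c).isBoundedUnder_le

theorem le_liminf_div_of_add_le (hσ : Tendsto (fun n : ℕ => σ n / n) atTop (𝓝 L))
    (ha : IsBoundedUnder (· ≤ ·) atTop fun n : ℕ => a n / n) (h : ∀ n, σ n + c ≤ a n) :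
    L ≤ liminf (fun n : ℕ => a n / n) atTop :=
  (tendsto_add_const_div hσ c).liminf_eq ▸
    liminf_le_liminf (.of_forall fun n => div_le_div_of_nonneg_right (h n) n.cast_nonneg)
      (tendsto_add_const_div hσ c).isBoundedUnder_ge ha.isCoboundedUnder_ge

theorem limsup_div_le_liminf_div_sub {b : ℕ → ℝ} {d κ : ℝ}
    (hσ : Tendsto (fun n : ℕ => σ n / n) atTop (𝓝 L))
    (ha : IsBoundedUnder (· ≥ ·) atTop fun n : ℕ => a n / n)
    (hb : IsBoundedUnder (· ≤ ·) atTop fun n : ℕ => b n / n)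
    (hσa : ∀ n, a n ≤ σ n + c) (hσb : ∀ n, σ n + n * κ + d ≤ b n) :
    limsup (fun n : ℕ => a n / n) atTop ≤ liminf (fun n : ℕ => b n / n) atTop - κ := by
  have hσκ : Tendsto (fun n : ℕ => (σ n + n * κ) / n) atTop (𝓝 (L + κ)) :=
    (hσ.add_const κ).congr' <| (eventually_ne_atTop 0).mono fun n hn => by field_simp
  linarith [limsup_div_le_of_le_add hσ ha hσa, le_liminf_div_of_add_le hσκ hb hσb]

end GrowthRate

namespace Units

variable {R : Type*} [NormedRing R] [NormOneClass R] (u : Rˣ)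

theorem norm_pow_pos (n : ℕ) : 0 < ‖(u ^ n : R)‖ :=
  have := NormOneClass.nontrivial (G := R)
  norm_pos_iff.mpr (u ^ n).ne_zero

theorem subadditive_log_norm_pow : Subadditive fun n => log ‖(u ^ n : R)‖ := fun m n =>
  calc log ‖(u ^ (m + n) : R)‖ ≤ log (‖(u ^ m : R)‖ * ‖(u ^ n : R)‖) :=
        log_le_log (u.norm_pow_pos _) (by rw [pow_add]; exact norm_mul_le _ _)
    _ = _ := log_mul (u.norm_pow_pos m).ne' (u.norm_pow_pos n).ne'

theorem neg_log_norm_inv_le_log_norm_pow_div {n : ℕ} (hn : n ≠ 0) :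
    -log ‖(↑u⁻¹ : R)‖ ≤ log ‖(u ^ n : R)‖ / n := by
  have hinv : 1 ≤ ‖(↑u⁻¹ : R)‖ ^ n * ‖(u ^ n : R)‖ :=
    calc (1 : ℝ) = ‖((u⁻¹ ^ n * u ^ n : Rˣ) : R)‖ := by simp
      _ ≤ ‖(↑u⁻¹ : R)‖ ^ n * ‖(u ^ n : R)‖ := by
        push_cast
        exact (norm_mul_le _ _).trans
          (mul_le_mul_of_nonneg_right (norm_pow_le _ n) (norm_nonneg _))
  have hlog := log_nonneg hinv
  rw [log_mul (pow_pos (by simpa using u⁻¹.norm_pow_pos 1) n).ne' (u.norm_pow_pos n).ne',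
    log_pow] at hlog
  rw [le_div_iff₀ (by positivity)]
  linarith

theorem exists_tendsto_log_norm_pow_div :
    ∃ L, Tendsto (fun n : ℕ => log ‖(u ^ n : R)‖ / n) atTop (𝓝 L) := by
  refine ⟨_, u.subadditive_log_norm_pow.tendsto_lim ⟨-|log ‖(↑u⁻¹ : R)‖|, ?_⟩⟩
  rintro _ ⟨n, rfl⟩
  rcases eq_or_ne n 0 with rfl | hn
  · simp
  · exact (neg_le_neg (le_abs_self _)).trans (u.neg_log_norm_inv_le_log_norm_pow_div hn)

end Units

section Orbits

variable {𝕜 E F : Type*} [NontriviallyNormedField 𝕜] [NormedAddCommGroup E] [NormedSpace 𝕜 E]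
  [NormedAddCommGroup F] [NormedSpace 𝕜 F]

theorem ContinuousLinearMap.log_norm_apply_le (f : E →L[𝕜] F) {x : E} (hx : f x ≠ 0) :
    log ‖f x‖ ≤ log ‖f‖ + log ‖x‖ := by
  have hx0 : x ≠ 0 := fun h => hx (h ▸ map_zero f)
  have hf0 : f ≠ 0 := fun h => hx (by simp [h])
  rw [← log_mul (norm_ne_zero_iff.mpr hf0) (norm_ne_zero_iff.mpr hx0)]
  exact log_le_log (norm_pos_iff.mpr hx) (f.le_opNorm x)

theorem ContinuousLinearMap.log_opNorm_add_log_norm_le {G H : Type*} [NormedAddCommGroup G]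
    [NormedSpace 𝕜 G] [NormedAddCommGroup H] [NormedSpace 𝕜 H] {f : E →L[𝕜] F} {g : G →L[𝕜] H}
    (hf : f ≠ 0) {y : G} (hy : g y ≠ 0) {K : ℝ} (hK : 0 < K)
    (h : ∀ x, ‖f x‖ * ‖y‖ ≤ K * (‖x‖ * ‖g y‖)) : log ‖f‖ + log ‖y‖ ≤ log K + log ‖g y‖ := by
  have hy0 : 0 < ‖y‖ := norm_pos_iff.mpr fun h => hy (h ▸ map_zero g)
  have hgy : 0 < ‖g y‖ := norm_pos_iff.mpr hy
  have hbound : ‖f‖ ≤ K * ‖g y‖ / ‖y‖ := f.opNorm_le_bound (by positivity) fun x => by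
    rw [div_mul_eq_mul_div, le_div_iff₀ hy0]; linarith [h x]
  rw [← log_mul (norm_ne_zero_iff.mpr hf) hy0.ne', ← log_mul hK.ne' hgy.ne']
  exact log_le_log (by positivity) ((le_div_iff₀ hy0).mp hbound)

namespace Units

variable (u : (E →L[𝕜] E)ˣ) {x : E}

theorem inv_pow_apply_pow_apply (n : ℕ) (x : E) :
    (↑u⁻¹ ^ n : E →L[𝕜] E) ((↑u ^ n : E →L[𝕜] E) x) = x := by
  rw [← Units.val_pow_eq_pow_val, ← Units.val_pow_eq_pow_val, ← mul_apply_eq_comp,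
    ← Units.val_mul, inv_pow, inv_mul_cancel, Units.val_one, one_apply_eq_self]

theorem pow_apply_ne_zero (hx : x ≠ 0) (n : ℕ) : (↑u ^ n : E →L[𝕜] E) x ≠ 0 := fun h =>
  hx (by rw [← u.inv_pow_apply_pow_apply n x, h, map_zero])

theorem log_norm_le_log_norm_inv_pow_add (hx : x ≠ 0) (n : ℕ) :
    log ‖x‖ ≤ log ‖(↑u⁻¹ ^ n : E →L[𝕜] E)‖ + log ‖(↑u ^ n : E →L[𝕜] E) x‖ := by
  have key := (↑u⁻¹ ^ n : E →L[𝕜] E).log_norm_apply_le (x := (↑u ^ n : E →L[𝕜] E) x)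
  rw [u.inv_pow_apply_pow_apply] at key
  exact key hx

theorem isBoundedUnder_log_norm_pow_apply_div [Nontrivial E] (hx : x ≠ 0) :
    IsBoundedUnder (· ≤ ·) atTop (fun n : ℕ => log ‖(↑u ^ n : E →L[𝕜] E) x‖ / n) ∧
      IsBoundedUnder (· ≥ ·) atTop (fun n : ℕ => log ‖(↑u ^ n : E →L[𝕜] E) x‖ / n) := by
  obtain ⟨_, hu⟩ := u.exists_tendsto_log_norm_pow_div
  obtain ⟨_, hu'⟩ := u⁻¹.exists_tendsto_log_norm_pow_div
  refine ⟨isBoundedUnder_le_div_of_le_add hu fun n =>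
    (↑u ^ n : E →L[𝕜] E).log_norm_apply_le (u.pow_apply_ne_zero hx n),
    isBoundedUnder_ge_div_of_add_le (σ := fun n => -log ‖(↑u⁻¹ ^ n : E →L[𝕜] E)‖) (c := log ‖x‖)
      (hu'.neg.congr fun n => (neg_div _ _).symm) fun n => ?_⟩
  linarith [u.log_norm_le_log_norm_inv_pow_add hx n]

end Units

end Orbits

theorem LinearMap.toContinuousLinearMap_pow_apply {𝕜 E : Type*} [NontriviallyNormedField 𝕜]
    [CompleteSpace 𝕜] [NormedAddCommGroup E] [NormedSpace 𝕜 E] [FiniteDimensional 𝕜 E]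
    (f : Module.End 𝕜 E) (n : ℕ) (x : E) : (toContinuousLinearMap f ^ n) x = (f ^ n) x := by
  simp only [FunLike.coe_pow_eq_iterate, coe_toContinuousLinearMap', Module.End.coe_pow]

theorem Module.End.bijective_restrict_of_injective {K V : Type*} [DivisionRing K] [AddCommGroup V]
    [Module K V] {p : Submodule K V} [FiniteDimensional K p] {f : Module.End K V}
    (hf : Function.Injective f) (hp : ∀ x ∈ p, f x ∈ p) : Function.Bijective (f.restrict hp) :=
  have hinj : Function.Injective (f.restrict hp) := fun _ _ hxy =>
    Subtype.ext (hf (congrArg Subtype.val hxy))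
  ⟨hinj, LinearMap.injective_iff_surjective.mp hinj⟩

theorem Module.End.exists_unit_restrict {𝕜 V : Type*} [NontriviallyNormedField 𝕜]
    [CompleteSpace 𝕜] [NormedAddCommGroup V] [NormedSpace 𝕜 V] {p : Submodule 𝕜 V}
    [FiniteDimensional 𝕜 p] {f : Module.End 𝕜 V} (hf : Function.Injective f)
    (hp : ∀ x ∈ p, f x ∈ p) :
    ∃ u : (p →L[𝕜] p)ˣ, ∀ (n : ℕ) (x : p), ((↑u ^ n : p →L[𝕜] p) x : V) = (f ^ n) x := by
  have := FiniteDimensional.complete 𝕜 p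
  obtain ⟨u, hu⟩ : IsUnit (LinearMap.toContinuousLinearMap (f.restrict hp)) :=
    ContinuousLinearMap.isUnit_iff_bijective.mpr (bijective_restrict_of_injective hf hp)
  refine ⟨u, fun n x => ?_⟩
  rw [hu, LinearMap.toContinuousLinearMap_pow_apply, pow_restrict]
  rfl

theorem stmt14_general {V : Type*} [NormedAddCommGroup V] [NormedSpace ℝ V]
    [FiniteDimensional ℝ V]
    (E F : Submodule ℝ V)
    (A : V →ₗ[ℝ] V) (hbij : Function.Bijective A)
    (hAE : ∀ v ∈ E, A v ∈ E) (hAF : ∀ w ∈ F, A w ∈ F)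
    (C ρ : ℝ) (hC : 0 < C) (hρ : ρ ∈ Set.Ioo (0 : ℝ) 1)
    (hdom : ∀ n : ℕ, ∀ v ∈ E, ∀ w ∈ F,
      ‖(A ^ n) v‖ * ‖w‖ ≤ C * ρ ^ n * (‖v‖ * ‖(A ^ n) w‖)) :
    ∀ v ∈ E, v ≠ 0 → ∀ w ∈ F, w ≠ 0 →
      Filter.limsup (fun n : ℕ => (n : ℝ)⁻¹ * Real.log ‖(A ^ n) v‖) atTop ≤
        Filter.liminf (fun n : ℕ => (n : ℝ)⁻¹ * Real.log ‖(A ^ n) w‖) atTop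
          - Real.log (1 / ρ) := by
  intro v hvE hv w hwF hw
  obtain ⟨S, hS⟩ := Module.End.exists_unit_restrict hbij.1 hAE
  obtain ⟨T, hT⟩ := Module.End.exists_unit_restrict hbij.1 hAF
  have hS_norm (n : ℕ) (x : E) : ‖(↑S ^ n : E →L[ℝ] E) x‖ = ‖(A ^ n) x‖ := by
    rw [Submodule.coe_norm, hS]
  have hT_norm (n : ℕ) (y : F) : ‖(↑T ^ n : F →L[ℝ] F) y‖ = ‖(A ^ n) y‖ := by
    rw [Submodule.coe_norm, hT]
  have hx : (⟨v, hvE⟩ : E) ≠ 0 := by simpa using hv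
  have hy : (⟨w, hwF⟩ : F) ≠ 0 := by simpa using hw
  have : Nontrivial E := ⟨⟨_, 0, hx⟩⟩
  have : Nontrivial F := ⟨⟨_, 0, hy⟩⟩
  obtain ⟨L, hL⟩ := Units.exists_tendsto_log_norm_pow_div (R := E →L[ℝ] E) S
  simp only [inv_mul_eq_div]
  refine limsup_div_le_liminf_div_sub hL (c := log ‖v‖) (d := log ‖w‖ - log C) ?_ ?_
    (fun n => ?_) (fun n => ?_)
  · simpa only [hS_norm] using (S.isBoundedUnder_log_norm_pow_apply_div hx).2
  · simpa only [hT_norm] using (T.isBoundedUnder_log_norm_pow_apply_div hy).1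
  · simpa only [hS_norm, Submodule.coe_norm] using
      (↑S ^ n : E →L[ℝ] E).log_norm_apply_le (S.pow_apply_ne_zero hx n)
  · have hSn : (↑S ^ n : E →L[ℝ] E) ≠ 0 := fun h => S.pow_apply_ne_zero hx n (by simp [h])
    have key := (↑S ^ n : E →L[ℝ] E).log_opNorm_add_log_norm_le hSn (T.pow_apply_ne_zero hy n)
      (mul_pos hC (pow_pos hρ.1 n)) fun x => by
        simpa only [hS_norm, hT_norm, Submodule.coe_norm] using hdom n x x.2 w hwF
    rw [hT_norm, Submodule.coe_norm, log_mul hC.ne' (pow_pos hρ.1 n).ne', log_pow] at key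
    rw [one_div, log_inv]
    linarith

/-- Dominated splitting: if `‖Aⁿ|_E‖ · ‖(Aⁿ|_F)⁻¹‖ ≤ C ρⁿ` (stated pointwise:
`‖Aⁿ v‖ / ‖v‖ ≤ C ρⁿ ‖Aⁿ w‖ / ‖w‖` for `v ∈ E`, `w ∈ F`), then every Lyapunov exponent
along `E` is at most every Lyapunov exponent along `F` minus `log (1/ρ)`. -/
theorem stmt14 {V : Type*} [NormedAddCommGroup V] [NormedSpace ℝ V]
    [FiniteDimensional ℝ V]
    (E F : Submodule ℝ V) (hEF : E ⊓ F = ⊥) (hsup : E ⊔ F = ⊤)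
    (A : V →ₗ[ℝ] V) (hbij : Function.Bijective A)
    (hAE : ∀ v ∈ E, A v ∈ E) (hAF : ∀ w ∈ F, A w ∈ F)
    (C ρ : ℝ) (hC : 0 < C) (hρ : ρ ∈ Set.Ioo (0 : ℝ) 1)
    (hdom : ∀ n : ℕ, ∀ v ∈ E, ∀ w ∈ F,
      ‖(A ^ n) v‖ * ‖w‖ ≤ C * ρ ^ n * (‖v‖ * ‖(A ^ n) w‖)) :
    ∀ v ∈ E, v ≠ 0 → ∀ w ∈ F, w ≠ 0 →
      Filter.limsup (fun n : ℕ => (n : ℝ)⁻¹ * Real.log ‖(A ^ n) v‖) atTop ≤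
        Filter.liminf (fun n : ℕ => (n : ℝ)⁻¹ * Real.log ‖(A ^ n) w‖) atTop
          - Real.log (1 / ρ) :=
  stmt14_general E F A hbij hAE hAF C ρ hC hρ hdom
end
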